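/- arXiv:1106.0318 — 9 statements merged into one kernel-verified Lean document; each statement's English description precedes it below -/
import Mathlib

section
/- For a,b > 0, the function V_{b,a}(x,y) = a x² + b y² - xy + x²y² is a first integral of the composition map G_{b,a} = G_b ∘ G_a, where G_β(x,y) = (y, -x + y/(β+y²)); that is, V_{b,a}(G_{b,a}(x,y)) = V_{b,a}(x,y) for all (x,y) ∈ ℝ². -/
/-- The map `G_β(x,y) = (y, -x + y/(β+y²))`. -/
noncomputable def Gmap (β : ℝ) (p : ℝ × ℝ) : ℝ × ℝ :=
  (p.2, -p.1 + p.2 / (β + p.2 ^ 2))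

/-- The first integral `V_{b,a}(x,y) = a x² + b y² - xy + x²y²`. -/
noncomputable def Vba (a b : ℝ) (p : ℝ × ℝ) : ℝ :=
  a * p.1 ^ 2 + b * p.2 ^ 2 - p.1 * p.2 + p.1 ^ 2 * p.2 ^ 2

lemma Vba_swap_Gmap (a b : ℝ) (ha : 0 < a) (p : ℝ × ℝ) :
    Vba b a (Gmap a p) = Vba a b p := by
  obtain ⟨x, y⟩ := p
  have hden : a + y ^ 2 ≠ 0 := by positivity
  simp only [Gmap, Vba]
  field_simp
  ring

/-- `V_{b,a}` is a first integral of `G_{b,a} = G_b ∘ G_a`. -/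
theorem stmt1 (a b : ℝ) (ha : 0 < a) (hb : 0 < b) (p : ℝ × ℝ) :
    Vba a b (Gmap b (Gmap a p)) = Vba a b p := by
  rw [Vba_swap_Gmap b a hb, Vba_swap_Gmap a b ha]
end

section
/- For a,b > 0, the identity V_{b,a}(x,y) = V_{a,b}(G_a(x,y)) holds for all (x,y) ∈ ℝ², where V_{b,a}(x,y) = a x² + b y² - xy + x²y², V_{a,b}(x,y) = b x² + a y² - xy + x²y², and G_a(x,y) = (y, -x + y/(a+y²)). -/
/- The difference `V_{a,b}(y, z) - V_{b,a}(x, y)` factors as `(z - x) ((a + y²)(x + z) - y)`,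
and the second factor vanishes exactly when `z` is the next term of the recurrence,
`x + z = y / (a + y²)`. -/

lemma Vba_eq_of_mul_add_eq (a b x y z : ℝ) (h : (a + y ^ 2) * (x + z) = y) :
    Vba b a (y, z) = Vba a b (x, y) := by
  simp only [Vba]
  linear_combination (z - x) * h

theorem stmt2_general (a b : ℝ) (ha : 0 < a) (p : ℝ × ℝ) :
    Vba a b p = Vba b a (Gmap a p) := by
  obtain ⟨x, y⟩ := p
  refine (Vba_eq_of_mul_add_eq a b x y _ ?_).symm
  rw [add_neg_cancel_left, mul_div_cancel₀ y (by positivity)]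

/-- `V_{b,a}(x,y) = V_{a,b}(G_a(x,y))` for all `(x,y)`. -/
theorem stmt2 (a b : ℝ) (ha : 0 < a) (hb : 0 < b) (p : ℝ × ℝ) :
    Vba a b p = Vba b a (Gmap a p) :=
  stmt2_general a b ha p
end

section
/- Let a,b > 0 with ab < 1/4. Define x_± = ±√(-b + (1/2)√(b/a)) and y_± = ±√(-a + (1/2)√(a/b)). Then the quantities under the square roots are positive, and the points P_± = (x_±, y_±) are fixed points of the map G_{b,a} = G_b ∘ G_a, where G_β(x,y) = (y, -x + y/(β+y²)). -/
/-- For `ab < 1/4` the radicands are positive and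
`P_± = (±√(-b + (1/2)√(b/a)), ±√(-a + (1/2)√(a/b)))` are fixed points of
`G_{b,a} = G_b ∘ G_a`. -/
theorem stmt4 (a b : ℝ) (ha : 0 < a) (hb : 0 < b) (hab : a * b < 1 / 4) :
    0 < -b + (1 / 2) * Real.sqrt (b / a) ∧
    0 < -a + (1 / 2) * Real.sqrt (a / b) ∧
    (∀ ε : ℝ, ε = 1 ∨ ε = -1 →
      Gmap b (Gmap a (ε * Real.sqrt (-b + (1 / 2) * Real.sqrt (b / a)),
          ε * Real.sqrt (-a + (1 / 2) * Real.sqrt (a / b)))) =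
        (ε * Real.sqrt (-b + (1 / 2) * Real.sqrt (b / a)),
          ε * Real.sqrt (-a + (1 / 2) * Real.sqrt (a / b)))) := by
  set t := Real.sqrt (b / a) with ht
  set s := Real.sqrt (a / b) with hs
  have ht2 : t ^ 2 = b / a := Real.sq_sqrt (by positivity)
  have hs2 : s ^ 2 = a / b := Real.sq_sqrt (by positivity)
  have htpos : 0 < t := Real.sqrt_pos.2 (by positivity)
  have hspos : 0 < s := Real.sqrt_pos.2 (by positivity)
  have hst : s * t = 1 := by
    rw [hs, ht, ← Real.sqrt_mul (by positivity)]
    rw [show a / b * (b / a) = 1 by field_simp]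
    exact Real.sqrt_one
  have hX : 0 < -b + (1 / 2) * t := by
    have h1 : (2 * b) ^ 2 < t ^ 2 := by
      rw [ht2, lt_div_iff₀ ha]; nlinarith
    nlinarith
  have hY : 0 < -a + (1 / 2) * s := by
    have h1 : (2 * a) ^ 2 < s ^ 2 := by
      rw [hs2, lt_div_iff₀ hb]; nlinarith
    nlinarith
  refine ⟨hX, hY, ?_⟩
  intro ε hε
  have hε2 : ε ^ 2 = 1 := by rcases hε with h | h <;> subst h <;> norm_num
  set u := Real.sqrt (-b + (1 / 2) * t) with hu
  set v := Real.sqrt (-a + (1 / 2) * s) with hv0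
  have hu2 : u ^ 2 = -b + (1 / 2) * t := Real.sq_sqrt hX.le
  have hv2 : v ^ 2 = -a + (1 / 2) * s := Real.sq_sqrt hY.le
  have hvsu : v = s * u := by
    have key : -a + (1 / 2) * s = s ^ 2 * (-b + (1 / 2) * t) := by
      have h1 : s ^ 2 * b = a := by rw [hs2]; field_simp
      have h2 : s ^ 2 * t = s := by
        calc s ^ 2 * t = s * (s * t) := by ring
          _ = s := by rw [hst, mul_one]
      nlinarith [h1, h2]
    rw [hv0, key, Real.sqrt_mul (sq_nonneg s), Real.sqrt_sq hspos.le, hu]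
  have hda : a + (ε * v) ^ 2 = s / 2 := by
    have : (ε * v) ^ 2 = ε ^ 2 * v ^ 2 := by ring
    rw [this, hε2, one_mul, hv2]; ring
  have hdb : b + (ε * u) ^ 2 = t / 2 := by
    have : (ε * u) ^ 2 = ε ^ 2 * u ^ 2 := by ring
    rw [this, hε2, one_mul, hu2]; ring
  have step1 : Gmap a (ε * u, ε * v) = (ε * v, ε * u) := by
    simp only [Gmap]
    refine Prod.ext rfl ?_
    show -(ε * u) + ε * v / (a + (ε * v) ^ 2) = ε * u
    rw [hda, hvsu]
    field_simp
    ring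
  have step2 : Gmap b (ε * v, ε * u) = (ε * u, ε * v) := by
    simp only [Gmap]
    refine Prod.ext rfl ?_
    show -(ε * v) + ε * u / (b + (ε * u) ^ 2) = ε * v
    have ht1 : t = 1 / s := by
      field_simp
      linarith [hst, mul_comm s t]
    rw [hdb, hvsu, ht1]
    field_simp
    ring
  rw [step1, step2]
end

section
/- For a,b > 0 with ab ≥ 1/4, the origin is the only fixed point of the map G_{b,a} = G_b ∘ G_a, where G_β(x,y) = (y, -x + y/(β+y²)). -/
lemma div_eq_of_Gmap_Gmap_eq_self {a b x y : ℝ} (h : Gmap b (Gmap a (x, y)) = (x, y)) :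
    y / (a + y ^ 2) = 2 * x ∧ x / (b + x ^ 2) = 2 * y := by
  simp only [Gmap, Prod.mk.injEq] at h
  obtain ⟨h₁, h₂⟩ := h
  rw [h₁] at h₂
  constructor <;> linarith

lemma eq_zero_of_eq_two_mul_mul_add_sq {a b x y : ℝ} (ha : 0 < a) (hb : 0 < b)
    (hab : 1 / 4 ≤ a * b) (hy : y = 2 * x * (a + y ^ 2)) (hx : x = 2 * y * (b + x ^ 2)) :
    x = 0 ∧ y = 0 := by
  have hxy : x * y = 0 := by
    by_contra hne
    have hprod : x * y * (4 * ((a + y ^ 2) * (b + x ^ 2))) = x * y * 1 := by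
      linear_combination (-y) * hx - 2 * y * (b + x ^ 2) * hy
    have hone : 4 * ((a + y ^ 2) * (b + x ^ 2)) = 1 := mul_left_cancel₀ hne hprod
    have hpos : 0 < (x * y) ^ 2 := by positivity
    nlinarith [mul_nonneg ha.le (sq_nonneg y), mul_nonneg hb.le (sq_nonneg x)]
  rcases mul_eq_zero.mp hxy with hx₀ | hy₀
  · subst hx₀
    exact ⟨rfl, by simpa using hy⟩
  · subst hy₀
    exact ⟨by simpa using hx, rfl⟩

/-- For `ab ≥ 1/4` the origin is the unique fixed point of `G_{b,a} = G_b ∘ G_a`. -/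
theorem stmt6 (a b : ℝ) (ha : 0 < a) (hb : 0 < b) (hab : 1 / 4 ≤ a * b) :
    Gmap b (Gmap a (0, 0)) = (0, 0) ∧
    ∀ p : ℝ × ℝ, Gmap b (Gmap a p) = p → p = (0, 0) := by
  refine ⟨by simp [Gmap], ?_⟩
  rintro ⟨x, y⟩ h
  obtain ⟨hy, hx⟩ := div_eq_of_Gmap_Gmap_eq_self h
  rw [div_eq_iff (by positivity)] at hy hx
  obtain ⟨rfl, rfl⟩ := eq_zero_of_eq_two_mul_mul_add_sq ha hb hab hy hx
  rfl
end

section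
/- Let a,b > 0. A point (x,y) ∈ ℝ² satisfies G_{b,a}(G_{b,a}(x,y)) = (x,y) but is not a fixed point of G_{b,a} if and only if R(x,y) := x²y² + a x² - xy + b y² + ab = 0 and (x,y) is not a fixed point, i.e. the 2-periodic points of G_{b,a} lie exactly on the set {V_{b,a}(x,y) = -ab}. -/
/-!
Write `G_{b,a}(x,y) = (z,w)`. Since `G_β(x,y) = (y,v)` means `(x + v)(β + y²) = y`, this is the pair
of relations `(x + z)(a + y²) = y` and `(y + w)(b + z²) = z`, and `R(x,y) = (a + y²)(b + x²) - xy`.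
If also `G_{b,a}(z,w) = (x,y)` with `(z,w) ≠ (x,y)`, subtracting the two pairs of relations gives
`(x + z)(y + w) = 1`, and the product of the first relation with its counterpart `(w + y)(b + x²) = x`
is then `R(x,y) = 0`. Conversely, on `R = 0` the relations force `xz = b`, `(x + z)(y + w) = 1` and
`yw = a`, which turn the relations for `(x,y) ↦ (z,w)` into those for `(z,w) ↦ (x,y)`.
-/

lemma Gmap_snd_eq_iff {β : ℝ} (hβ : 0 < β) (p : ℝ × ℝ) (v : ℝ) :
    (Gmap β p).2 = v ↔ (p.1 + v) * (β + p.2 ^ 2) = p.2 := by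
  have hden : β + p.2 ^ 2 ≠ 0 := by positivity
  simp only [Gmap]
  constructor
  · rintro rfl
    field_simp
    ring
  · intro h
    field_simp
    linear_combination -h

lemma Gmap_comp_eq_iff {a b : ℝ} (ha : 0 < a) (hb : 0 < b) (p q : ℝ × ℝ) :
    Gmap b (Gmap a p) = q ↔
      (p.1 + q.1) * (a + p.2 ^ 2) = p.2 ∧ (p.2 + q.2) * (b + q.1 ^ 2) = q.1 := by
  rw [Prod.ext_iff, Gmap_snd_eq_iff hb, ← Gmap_snd_eq_iff ha p q.1]
  change (Gmap a p).2 = q.1 ∧ (p.2 + q.2) * (b + (Gmap a p).2 ^ 2) = (Gmap a p).2 ↔ _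
  constructor <;> rintro ⟨h1, h2⟩
  · exact ⟨h1, h1 ▸ h2⟩
  · exact ⟨h1, h1 ▸ h2⟩

section TwoCycle

variable {a b x y z w : ℝ}

lemma add_mul_add_eq_one_of_two_cycle
    (h1 : (x + z) * (a + y ^ 2) = y) (h2 : (y + w) * (b + z ^ 2) = z)
    (h3 : (z + x) * (a + w ^ 2) = w) (h4 : (w + y) * (b + x ^ 2) = x) (hne : (z, w) ≠ (x, y)) :
    (x + z) * (y + w) = 1 := by
  rcases eq_or_ne z x with rfl | hzx
  · have hwy : w ≠ y := fun h => hne (by rw [h])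
    have : (y - w) * ((z + z) * (y + w) - 1) = 0 := by linear_combination h1 - h3
    linear_combination (mul_eq_zero.1 this).resolve_left (sub_ne_zero.2 hwy.symm)
  · have : (z - x) * ((x + z) * (y + w) - 1) = 0 := by linear_combination h2 - h4
    linear_combination (mul_eq_zero.1 this).resolve_left (sub_ne_zero.2 hzx)

lemma R_eq_zero_of_two_cycle
    (h1 : (x + z) * (a + y ^ 2) = y) (h2 : (y + w) * (b + z ^ 2) = z)
    (h3 : (z + x) * (a + w ^ 2) = w) (h4 : (w + y) * (b + x ^ 2) = x) (hne : (z, w) ≠ (x, y)) :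
    (a + y ^ 2) * (b + x ^ 2) = x * y := by
  have hst := add_mul_add_eq_one_of_two_cycle h1 h2 h3 h4 hne
  linear_combination (w + y) * (b + x ^ 2) * h1 + y * h4 - (a + y ^ 2) * (b + x ^ 2) * hst

lemma two_cycle_of_R_eq_zero (ha : 0 < a) (hb : 0 < b)
    (h1 : (x + z) * (a + y ^ 2) = y) (h2 : (y + w) * (b + z ^ 2) = z)
    (hR : (a + y ^ 2) * (b + x ^ 2) = x * y) :
    (z + x) * (a + w ^ 2) = w ∧ (w + y) * (b + x ^ 2) = x := by
  have hxz : x * z = b :=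
    mul_right_cancel₀ (by positivity : a + y ^ 2 ≠ 0) (by linear_combination x * h1 - hR)
  have hz : z ≠ 0 := by rintro rfl; simp at hxz; linarith
  have hst : (x + z) * (y + w) = 1 :=
    mul_left_cancel₀ hz (by linear_combination h2 + (y + w) * hxz)
  have h4 : (w + y) * (b + x ^ 2) = x := by linear_combination x * hst - (y + w) * hxz
  have hyw : y * w = a :=
    mul_right_cancel₀ (by positivity : b + x ^ 2 ≠ 0) (by linear_combination y * h4 - hR)
  exact ⟨by linear_combination w * hst - (x + z) * hyw, h4⟩

end TwoCycle

/-- A non-fixed point is `2`-periodic for `G_{b,a} = G_b ∘ G_a` iff it lies on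
`{R = 0} = {V_{b,a} = -ab}`, where `R(x,y) = x²y² + ax² - xy + by² + ab`. -/
theorem stmt9 (a b : ℝ) (ha : 0 < a) (hb : 0 < b) (p : ℝ × ℝ) :
    (Gmap b (Gmap a (Gmap b (Gmap a p))) = p ∧ Gmap b (Gmap a p) ≠ p) ↔
      (p.1 ^ 2 * p.2 ^ 2 + a * p.1 ^ 2 - p.1 * p.2 + b * p.2 ^ 2 + a * b = 0 ∧
        Gmap b (Gmap a p) ≠ p) := by
  obtain ⟨x, y⟩ := p
  obtain ⟨⟨z, w⟩, hq⟩ : ∃ q, Gmap b (Gmap a (x, y)) = q := ⟨_, rfl⟩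
  obtain ⟨h1, h2⟩ := (Gmap_comp_eq_iff ha hb _ _).1 hq
  rw [hq]
  refine and_congr_left fun hne => ?_
  have hR : x ^ 2 * y ^ 2 + a * x ^ 2 - x * y + b * y ^ 2 + a * b =
      (a + y ^ 2) * (b + x ^ 2) - x * y := by ring
  rw [Gmap_comp_eq_iff ha hb, hR, sub_eq_zero]
  exact ⟨fun ⟨h3, h4⟩ => R_eq_zero_of_two_cycle h1 h2 h3 h4 hne,
    two_cycle_of_R_eq_zero ha hb h1 h2⟩
end

section
/- Let a,b > 0. The polynomial R(x,y) = x²y² + a x² - xy + b y² + ab has a real zero if and only if ab ≤ 1/16. Consequently the map G_{b,a} has 2-periodic points (points of minimal period 2) if and only if 0 < ab < 1/16. -/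
def periodTwoPoly (a b x y : ℝ) : ℝ := x ^ 2 * y ^ 2 + a * x ^ 2 - x * y + b * y ^ 2 + a * b

section

variable {a b x y : ℝ}

lemma periodTwoPoly_eq : periodTwoPoly a b x y = (a + y ^ 2) * (b + x ^ 2) - x * y := by
  unfold periodTwoPoly; ring

lemma periodTwoPoly_swap : periodTwoPoly b a y x = periodTwoPoly a b x y := by
  unfold periodTwoPoly; ring

lemma periodTwoPoly_shift (hx : x ≠ 0) :
    periodTwoPoly b a y (b / x) = b / x ^ 2 * periodTwoPoly a b x y := by
  unfold periodTwoPoly; field_simp; ring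

lemma ne_zero_of_periodTwoPoly_eq_zero (ha : 0 < a) (hb : 0 < b)
    (h : periodTwoPoly a b x y = 0) : x ≠ 0 ∧ y ≠ 0 := by
  unfold periodTwoPoly at h
  constructor <;> rintro rfl <;> nlinarith

lemma periodTwoPoly_eq_zero_iff (ha : 0 < a) (hx : x ≠ 0) :
    periodTwoPoly a b x y = 0 ↔ y / (a + y ^ 2) = x + b / x := by
  have hay : a + y ^ 2 ≠ 0 := by positivity
  rw [periodTwoPoly_eq, div_eq_iff hay, add_div' _ _ _ hx, div_mul_eq_mul_div, eq_div_iff hx]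
  constructor <;> intro h <;> linear_combination -h

lemma Gmap_of_periodTwoPoly_eq_zero (ha : 0 < a) (hb : 0 < b) (h : periodTwoPoly a b x y = 0) :
    Gmap a (x, y) = (y, b / x) := by
  have hx := (ne_zero_of_periodTwoPoly_eq_zero ha hb h).1
  simp only [Gmap, (periodTwoPoly_eq_zero_iff ha hx).1 h, neg_add_cancel_left]

lemma Gmap_Gmap_of_periodTwoPoly_eq_zero (ha : 0 < a) (hb : 0 < b)
    (h : periodTwoPoly a b x y = 0) : Gmap b (Gmap a (x, y)) = (b / x, a / y) := by
  have hx := (ne_zero_of_periodTwoPoly_eq_zero ha hb h).1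
  have h' : periodTwoPoly b a y (b / x) = 0 := by rw [periodTwoPoly_shift hx, h, mul_zero]
  rw [Gmap_of_periodTwoPoly_eq_zero ha hb h, Gmap_of_periodTwoPoly_eq_zero hb ha h']

lemma periodTwoPoly_div_div_eq_zero (ha : 0 < a) (hb : 0 < b) (h : periodTwoPoly a b x y = 0) :
    periodTwoPoly a b (b / x) (a / y) = 0 := by
  obtain ⟨hx, hy⟩ := ne_zero_of_periodTwoPoly_eq_zero ha hb h
  rw [periodTwoPoly_shift hy, periodTwoPoly_shift hx, h, mul_zero, mul_zero]

lemma Gmap_Gmap_Gmap_Gmap_of_periodTwoPoly_eq_zero (ha : 0 < a) (hb : 0 < b)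
    (h : periodTwoPoly a b x y = 0) : Gmap b (Gmap a (Gmap b (Gmap a (x, y)))) = (x, y) := by
  rw [Gmap_Gmap_of_periodTwoPoly_eq_zero ha hb h,
    Gmap_Gmap_of_periodTwoPoly_eq_zero ha hb (periodTwoPoly_div_div_eq_zero ha hb h),
    div_div_cancel₀ hb.ne', div_div_cancel₀ ha.ne']

lemma mul_le_of_periodTwoPoly_eq_zero (ha : 0 < a) (hb : 0 < b) (h : periodTwoPoly a b x y = 0) :
    a * b ≤ 1 / 16 := by
  have hy := (ne_zero_of_periodTwoPoly_eq_zero ha hb h).2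
  have hsq : (2 * (a + y ^ 2) * x - y) ^ 2 = y ^ 2 - 4 * b * (a + y ^ 2) ^ 2 := by
    unfold periodTwoPoly at h; linear_combination 4 * (a + y ^ 2) * h
  have hle : 16 * (a * b) * y ^ 2 ≤ 1 * y ^ 2 := by
    nlinarith [sq_nonneg (2 * (a + y ^ 2) * x - y), mul_nonneg hb.le (sq_nonneg (a - y ^ 2))]
  linarith [le_of_mul_le_mul_right hle (by positivity)]

lemma sq_eq_of_periodTwoPoly_eq_zero (ha : 0 < a) (hab : a * b = 1 / 16)
    (h : periodTwoPoly a b x y = 0) : x ^ 2 = b ∧ y ^ 2 = a := by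
  have hsq : (2 * (a + y ^ 2) * x - y) ^ 2 + 4 * b * (y ^ 2 - a) ^ 2 = 0 := by
    unfold periodTwoPoly at h; linear_combination 4 * (a + y ^ 2) * h - 16 * y ^ 2 * hab
  have hy : y ^ 2 = a := by nlinarith [sq_nonneg (2 * (a + y ^ 2) * x - y), sq_nonneg (y ^ 2 - a)]
  have hxy : 4 * a * x = y := by
    rw [hy] at hsq; nlinarith [sq_nonneg (4 * a * x - y), sq_nonneg (y ^ 2 - a)]
  have hx : a ^ 2 * (x ^ 2 - b) = 0 := by
    linear_combination (1 / 16 : ℝ) * (congrArg (· ^ 2) hxy) + (1 / 16) * hy - a * hab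
  exact ⟨by linarith [(mul_eq_zero.1 hx).resolve_left (by positivity)], hy⟩

lemma exists_periodTwoPoly_eq_zero (hb : 0 < b) (hab : a * b ≤ 1 / 16) :
    ∃ x y, periodTwoPoly a b x y = 0 := by
  obtain ⟨t, ht⟩ : ∃ t : ℝ, t ^ 2 = 1 - 16 * (a * b) :=
    ⟨√(1 - 16 * (a * b)), Real.sq_sqrt (by linarith)⟩
  obtain ⟨s, hs, rfl⟩ : ∃ s : ℝ, 0 < s ∧ s ^ 2 = b :=
    ⟨√b, Real.sqrt_pos.2 hb, Real.sq_sqrt hb.le⟩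
  refine ⟨s, (1 + t) / (4 * s), ?_⟩
  unfold periodTwoPoly
  field_simp
  linear_combination 2 * ht

lemma div_div_eq_self_iff_of_periodTwoPoly_eq_zero (ha : 0 < a) (hb : 0 < b)
    (h : periodTwoPoly a b x y = 0) : (b / x, a / y) = (x, y) ↔ a * b = 1 / 16 := by
  obtain ⟨hx, hy⟩ := ne_zero_of_periodTwoPoly_eq_zero ha hb h
  simp only [Prod.ext_iff, div_eq_iff hx, div_eq_iff hy]
  constructor
  · rintro ⟨hxb, hya⟩
    have hxy : x * y = 4 * (a * b) := by rw [periodTwoPoly_eq] at h; nlinarith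
    have hab : (a * b) * (16 * (a * b) - 1) = 0 := by
      linear_combination -(congrArg (· ^ 2) hxy) - y ^ 2 * hxb - b * hya
    linarith [(mul_eq_zero.1 hab).resolve_left (by positivity)]
  · intro hab
    obtain ⟨hxb, hya⟩ := sq_eq_of_periodTwoPoly_eq_zero ha hab h
    exact ⟨by rw [← hxb]; ring, by rw [← hya]; ring⟩

lemma eq_or_mul_eq_of_div_add_sq_eq {β s t : ℝ} (hβ : 0 < β)
    (h : s / (β + s ^ 2) = t / (β + t ^ 2)) : s = t ∨ s * t = β := by
  rw [div_eq_div_iff (by positivity) (by positivity)] at h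
  have : (s - t) * (β - s * t) = 0 := by linear_combination h
  rcases mul_eq_zero.1 this with h | h
  · exact Or.inl (by linarith)
  · exact Or.inr (by linarith)

lemma periodTwoPoly_eq_zero_of_period_two (ha : 0 < a) (hb : 0 < b)
    (hper : Gmap b (Gmap a (Gmap b (Gmap a (x, y)))) = (x, y))
    (hne : Gmap b (Gmap a (x, y)) ≠ (x, y)) : periodTwoPoly a b x y = 0 := by
  set u := -x + y / (a + y ^ 2) with hu
  set v := -y + u / (b + u ^ 2) with hv
  have hG : Gmap b (Gmap a (x, y)) = (u, v) := rfl
  rw [hG] at hper hne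
  simp only [Gmap, Prod.ext_iff] at hper
  obtain ⟨hfst, hsnd⟩ := hper
  rw [hfst] at hsnd
  have hfa : y / (a + y ^ 2) = v / (a + v ^ 2) := by linarith
  have hfb : u / (b + u ^ 2) = x / (b + x ^ 2) := by linarith
  rcases eq_or_ne u x with hux | hux
  · rcases eq_or_mul_eq_of_div_add_sq_eq ha hfa with hyv | hyv
    · exact absurd (by rw [hux, hyv]) hne
    have hy0 : y ≠ 0 := by rintro rfl; linarith
    rw [← periodTwoPoly_swap, periodTwoPoly_eq_zero_iff hb hy0, ← hyv,
      mul_div_cancel_left₀ _ hy0, ← hux]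
    linarith
  · rcases eq_or_mul_eq_of_div_add_sq_eq hb hfb with hux' | hux'
    · exact absurd hux' hux
    have hx0 : x ≠ 0 := by rintro rfl; linarith
    rw [periodTwoPoly_eq_zero_iff ha hx0, ← hux', mul_div_cancel_right₀ _ hx0]
    linarith

end

/-- `R(x,y) = x²y² + ax² - xy + by² + ab` has a real zero iff `ab ≤ 1/16`, and
`G_{b,a} = G_b ∘ G_a` has points of minimal period two iff `ab < 1/16`. -/
theorem stmt10 (a b : ℝ) (ha : 0 < a) (hb : 0 < b) :
    ((∃ x y : ℝ, x ^ 2 * y ^ 2 + a * x ^ 2 - x * y + b * y ^ 2 + a * b = 0) ↔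
      a * b ≤ 1 / 16) ∧
    ((∃ p : ℝ × ℝ, Gmap b (Gmap a (Gmap b (Gmap a p))) = p ∧
        Gmap b (Gmap a p) ≠ p) ↔ a * b < 1 / 16) := by
  refine ⟨⟨fun ⟨x, y, h⟩ => mul_le_of_periodTwoPoly_eq_zero ha hb h,
    exists_periodTwoPoly_eq_zero hb⟩, ⟨?_, fun hab => ?_⟩⟩
  · rintro ⟨⟨x, y⟩, hper, hne⟩
    have h := periodTwoPoly_eq_zero_of_period_two ha hb hper hne
    refine (mul_le_of_periodTwoPoly_eq_zero ha hb h).lt_of_ne fun hab => hne ?_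
    rwa [Gmap_Gmap_of_periodTwoPoly_eq_zero ha hb h,
      div_div_eq_self_iff_of_periodTwoPoly_eq_zero ha hb h]
  · obtain ⟨x, y, h⟩ := exists_periodTwoPoly_eq_zero hb hab.le
    refine ⟨(x, y), Gmap_Gmap_Gmap_Gmap_of_periodTwoPoly_eq_zero ha hb h, ?_⟩
    rw [Gmap_Gmap_of_periodTwoPoly_eq_zero ha hb h, Ne,
      div_div_eq_self_iff_of_periodTwoPoly_eq_zero ha hb h]
    exact hab.ne
end

section
/- Let a,b > 0 with a ≠ b. Define R₁(x,h) = -4a x⁴ + (-4ab+4h+1)x² + 4bh and R₂(x,h) = -4b x⁴ + (-4ab+4h+1)x² + 4ah. Then the resultant of R₁ and R₂ with respect to x equals 256(a-b)⁴h²(16h² + (16a²+16b²+8)h + (4ab-1)²)². -/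
/-!
Since `R₁` and `R₂` are polynomials in `x²`, conjugating their `8 × 8` Sylvester matrix by the
permutation that lists even indices before odd ones yields two copies of the `4 × 4` Sylvester
matrix of the quadratics `P(t) = -4a t² + c t + 4bh` and `Q(t) = -4b t² + c t + 4ah`. Hence
`Res_x(R₁, R₂) = Res_t(P, Q)²`, and the resultant of two quadratics has a closed form.
-/

namespace Matrix

variable {R : Type*} [CommRing R]

theorem det_sylvester_quadratic (p₂ p₁ p₀ q₂ q₁ q₀ : R) :
    det !![p₂, p₁, p₀, 0;
           0, p₂, p₁, p₀;
           q₂, q₁, q₀, 0;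
           0, q₂, q₁, q₀] =
      (p₂ * q₀ - p₀ * q₂) ^ 2 - (p₂ * q₁ - p₁ * q₂) * (p₁ * q₀ - p₀ * q₁) := by
  simp [det_succ_row_zero, Fin.sum_univ_succ, Fin.succAbove]
  ring

theorem det_sylvester_even_quartic (p₂ p₁ p₀ q₂ q₁ q₀ : R) :
    det !![p₂, 0, p₁, 0, p₀, 0, 0, 0;
           0, p₂, 0, p₁, 0, p₀, 0, 0;
           0, 0, p₂, 0, p₁, 0, p₀, 0;
           0, 0, 0, p₂, 0, p₁, 0, p₀;
           q₂, 0, q₁, 0, q₀, 0, 0, 0;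
           0, q₂, 0, q₁, 0, q₀, 0, 0;
           0, 0, q₂, 0, q₁, 0, q₀, 0;
           0, 0, 0, q₂, 0, q₁, 0, q₀] =
      det !![p₂, p₁, p₀, 0;
             0, p₂, p₁, p₀;
             q₂, q₁, q₀, 0;
             0, q₂, q₁, q₀] ^ 2 := by
  -- `finProdFinEquiv (i, k) = 2 * i + k`: the parity `k` indexes the two diagonal blocks.
  rw [← det_submatrix_equiv_self (finProdFinEquiv : Fin 4 × Fin 2 ≃ Fin 8), ← Fin.prod_const,
    ← det_blockDiagonal]
  congr 1
  ext ⟨i, k⟩ ⟨j, l⟩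
  fin_cases i <;> fin_cases k <;> fin_cases j <;> fin_cases l <;> rfl

end Matrix

theorem stmt16_general (a b h : ℝ)
    (c : ℝ) (hc : c = -4 * a * b + 4 * h + 1) :
    Matrix.det
      !![-4 * a, 0, c, 0, 4 * b * h, 0, 0, 0;
         0, -4 * a, 0, c, 0, 4 * b * h, 0, 0;
         0, 0, -4 * a, 0, c, 0, 4 * b * h, 0;
         0, 0, 0, -4 * a, 0, c, 0, 4 * b * h;
         -4 * b, 0, c, 0, 4 * a * h, 0, 0, 0;
         0, -4 * b, 0, c, 0, 4 * a * h, 0, 0;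
         0, 0, -4 * b, 0, c, 0, 4 * a * h, 0;
         0, 0, 0, -4 * b, 0, c, 0, 4 * a * h] =
      256 * (a - b) ^ 4 * h ^ 2 *
        (16 * h ^ 2 + (16 * a ^ 2 + 16 * b ^ 2 + 8) * h + (4 * a * b - 1) ^ 2) ^ 2 := by
  rw [Matrix.det_sylvester_even_quartic, Matrix.det_sylvester_quadratic, hc]
  ring

/-- The resultant with respect to `x` of the two quartic polynomials
`R₁(x) = -4a x⁴ + (-4ab+4h+1)x² + 4bh` and `R₂(x) = -4b x⁴ + (-4ab+4h+1)x² + 4ah`,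
computed as the determinant of their `8 × 8` Sylvester matrix, equals
`256 (a-b)⁴ h² (16h² + (16a²+16b²+8)h + (4ab-1)²)²`. -/
theorem stmt16 (a b h : ℝ) (ha : 0 < a) (hb : 0 < b) (hne : a ≠ b)
    (c : ℝ) (hc : c = -4 * a * b + 4 * h + 1) :
    Matrix.det
      !![-4 * a, 0, c, 0, 4 * b * h, 0, 0, 0;
         0, -4 * a, 0, c, 0, 4 * b * h, 0, 0;
         0, 0, -4 * a, 0, c, 0, 4 * b * h, 0;
         0, 0, 0, -4 * a, 0, c, 0, 4 * b * h;
         -4 * b, 0, c, 0, 4 * a * h, 0, 0, 0;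
         0, -4 * b, 0, c, 0, 4 * a * h, 0, 0;
         0, 0, -4 * b, 0, c, 0, 4 * a * h, 0;
         0, 0, 0, -4 * b, 0, c, 0, 4 * a * h] =
      256 * (a - b) ^ 4 * h ^ 2 *
        (16 * h ^ 2 + (16 * a ^ 2 + 16 * b ^ 2 + 8) * h + (4 * a * b - 1) ^ 2) ^ 2 :=
  stmt16_general a b h c hc
end

section
/- Let a,b > 0 with ab < 1/4 and a ≠ b. Define h_min = -1/4 - ab + √(ab) and h_+ = (1/2)[-(a²+b²) - 1/2 + (a+b)√((a-b)² + 1)]. Then h_min < h_+ < 0. -/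
/-- For `a,b > 0`, `ab < 1/4`, `a ≠ b`:
`h_min = -1/4 - ab + √(ab)` and
`h_+ = (1/2)(-(a²+b²) - 1/2 + (a+b)√((a-b)²+1))` satisfy `h_min < h_+ < 0`. -/
theorem stmt17 (a b : ℝ) (ha : 0 < a) (hb : 0 < b) (hab : a * b < 1 / 4)
    (hne : a ≠ b) :
    -1 / 4 - a * b + Real.sqrt (a * b) <
      (1 / 2) * (-(a ^ 2 + b ^ 2) - 1 / 2 +
        (a + b) * Real.sqrt ((a - b) ^ 2 + 1)) ∧
    (1 / 2) * (-(a ^ 2 + b ^ 2) - 1 / 2 +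
        (a + b) * Real.sqrt ((a - b) ^ 2 + 1)) < 0 := by
  set s := Real.sqrt (a * b) with hs
  set t := Real.sqrt ((a - b) ^ 2 + 1) with ht
  have hs0 : 0 ≤ s := Real.sqrt_nonneg _
  have hssq : s ^ 2 = a * b := Real.sq_sqrt (by positivity)
  have ht0 : 0 ≤ t := Real.sqrt_nonneg _
  have htsq : t ^ 2 = (a - b) ^ 2 + 1 := Real.sq_sqrt (by positivity)
  have hd : 0 < (a - b) ^ 2 :=
    lt_of_le_of_ne (sq_nonneg _) (Ne.symm (pow_ne_zero 2 (sub_ne_zero.mpr hne)))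
  have hshalf : s < 1 / 2 := by
    have : s ^ 2 < (1 / 2 : ℝ) ^ 2 := by nlinarith
    exact lt_of_pow_lt_pow_left₀ 2 (by norm_num) this
  have hnz : (0:ℝ) < (2 * s - 1) ^ 2 := by nlinarith
  have key1 : 2 * s + (a - b) ^ 2 < (a + b) * t := by
    have h1 : (2 * s + (a - b) ^ 2) ^ 2 < ((a + b) * t) ^ 2 := by
      have hab2 : (a + b) ^ 2 = (a - b) ^ 2 + 4 * s ^ 2 := by nlinarith
      nlinarith [mul_pos hd hnz, sq_nonneg ((a-b)^2)]
    exact lt_of_pow_lt_pow_left₀ 2 (by positivity) h1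
  have key2 : (a + b) * t < a ^ 2 + b ^ 2 + 1 / 2 := by
    have h2 : ((a + b) * t) ^ 2 < (a ^ 2 + b ^ 2 + 1 / 2) ^ 2 := by
      have hq : (0:ℝ) < (1 / 2 - 2 * (a * b)) ^ 2 := by nlinarith
      nlinarith [hq]
    exact lt_of_pow_lt_pow_left₀ 2 (by positivity) h2
  constructor
  · nlinarith [key1]
  · nlinarith [key2]
end

section
/- Suppose {β_n} is a sequence of positive reals and I(x,y,n) = Σ_{1 ≤ i+j ≤ 4} I^{i,j}_n x^i y^j satisfies I(y, -x + y/(β_n + y²), n+1) = I(x,y,n) for all (x,y) ∈ ℝ² and all n ∈ ℕ, with I(·,·,n) not identically zero. Then β_{n+2} = β_n for all n, and I(x,y,n) = γ_n(β_n x² + β_{n+1} y² + x²y² - xy) for some nonzero constants γ_n with γ_{n+1} = γ_n. -/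
/-! Fix `y` and put `w = y / (β + y²)`. Comparing coefficients of `xᵏ` in
`I_{n+1}(y, w - x) = I_n(x, y)` expresses the `xᵏ`-coefficient of `I_n` through those of
`I_{n+1}` and powers of `w`. Since `w` is not a polynomial in `y`, clearing the denominator
`β + y²` and comparing coefficients in `y` (from `x³` down to `x⁰`) kills every coefficient
except those of `x²`, `y²`, `x²y²`, `xy` and ties these to the one of `x²y²`, which is the
same for all `n`. Computing the `y²`-coefficient of `I_{n+1}` in two ways gives
`β_{n+2} = β_n`. -/

open Finset

/-- A polynomial candidate invariant `I(x,y,n) = Σ_{1 ≤ i+j ≤ 4} c n i j · xⁱ yʲ`. -/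
noncomputable def Ipoly (c : ℕ → ℕ → ℕ → ℝ) (n : ℕ) (x y : ℝ) : ℝ :=
  ∑ i ∈ Finset.range 5, ∑ j ∈ Finset.range 5,
    if 1 ≤ i + j ∧ i + j ≤ 4 then c n i j * x ^ i * y ^ j else 0

open Polynomial in
theorem eq_zero_of_forall_sum_mul_pow_eq_zero {R : Type*} [CommRing R] [IsDomain R] [Infinite R]
    {N : ℕ} (a : Fin N → R) (h : ∀ t : R, ∑ k, a k * t ^ (k : ℕ) = 0) (k : Fin N) :
    a k = 0 := by
  have hp : ∑ i, C (a i) * X ^ (i : ℕ) = 0 :=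
    Polynomial.funext fun t => by simp [eval_finsetSum, h t]
  simpa [finsetSum_coeff, coeff_C_mul, coeff_X_pow, Fin.val_inj] using congrArg (coeff · k) hp

theorem Ipoly_eq (c : ℕ → ℕ → ℕ → ℝ) (n : ℕ) (x y : ℝ) :
    Ipoly c n x y =
      (c n 0 1 * y + c n 0 2 * y ^ 2 + c n 0 3 * y ^ 3 + c n 0 4 * y ^ 4) +
      (c n 1 0 + c n 1 1 * y + c n 1 2 * y ^ 2 + c n 1 3 * y ^ 3) * x +
      (c n 2 0 + c n 2 1 * y + c n 2 2 * y ^ 2) * x ^ 2 +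
      (c n 3 0 + c n 3 1 * y) * x ^ 3 + c n 4 0 * x ^ 4 := by
  simp only [Ipoly, sum_range_succ, sum_range_zero]
  norm_num
  ring

def StepInvariant (β : ℝ) (c : ℕ → ℕ → ℕ → ℝ) (n : ℕ) : Prop :=
  ∀ x y : ℝ, Ipoly c (n + 1) y (-x + y / (β + y ^ 2)) = Ipoly c n x y

section Step

variable {β : ℝ} {c : ℕ → ℕ → ℕ → ℝ} {n : ℕ}

theorem coeffs_x_eq_of_forall_Ipoly_eq {y w : ℝ}
    (h : ∀ x : ℝ, Ipoly c (n + 1) y (-x + w) = Ipoly c n x y) :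
    c (n + 1) 0 4 = c n 4 0 ∧
    -(c (n + 1) 0 3 + c (n + 1) 1 3 * y + 4 * w * c (n + 1) 0 4) = c n 3 0 + c n 3 1 * y ∧
    (c (n + 1) 0 2 + c (n + 1) 1 2 * y + c (n + 1) 2 2 * y ^ 2) +
      3 * w * (c (n + 1) 0 3 + c (n + 1) 1 3 * y) + 6 * w ^ 2 * c (n + 1) 0 4 =
      c n 2 0 + c n 2 1 * y + c n 2 2 * y ^ 2 ∧
    -((c (n + 1) 0 1 + c (n + 1) 1 1 * y + c (n + 1) 2 1 * y ^ 2 + c (n + 1) 3 1 * y ^ 3) +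
      2 * w * (c (n + 1) 0 2 + c (n + 1) 1 2 * y + c (n + 1) 2 2 * y ^ 2) +
      3 * w ^ 2 * (c (n + 1) 0 3 + c (n + 1) 1 3 * y) + 4 * w ^ 3 * c (n + 1) 0 4) =
      c n 1 0 + c n 1 1 * y + c n 1 2 * y ^ 2 + c n 1 3 * y ^ 3 ∧
    (c (n + 1) 1 0 * y + c (n + 1) 2 0 * y ^ 2 + c (n + 1) 3 0 * y ^ 3 + c (n + 1) 4 0 * y ^ 4) +
      w * (c (n + 1) 0 1 + c (n + 1) 1 1 * y + c (n + 1) 2 1 * y ^ 2 + c (n + 1) 3 1 * y ^ 3) +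
      w ^ 2 * (c (n + 1) 0 2 + c (n + 1) 1 2 * y + c (n + 1) 2 2 * y ^ 2) +
      w ^ 3 * (c (n + 1) 0 3 + c (n + 1) 1 3 * y) + w ^ 4 * c (n + 1) 0 4 =
      c n 0 1 * y + c n 0 2 * y ^ 2 + c n 0 3 * y ^ 3 + c n 0 4 * y ^ 4 := by
  have key := eq_zero_of_forall_sum_mul_pow_eq_zero ![
    (c (n + 1) 1 0 * y + c (n + 1) 2 0 * y ^ 2 + c (n + 1) 3 0 * y ^ 3 + c (n + 1) 4 0 * y ^ 4) +
      w * (c (n + 1) 0 1 + c (n + 1) 1 1 * y + c (n + 1) 2 1 * y ^ 2 + c (n + 1) 3 1 * y ^ 3) +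
      w ^ 2 * (c (n + 1) 0 2 + c (n + 1) 1 2 * y + c (n + 1) 2 2 * y ^ 2) +
      w ^ 3 * (c (n + 1) 0 3 + c (n + 1) 1 3 * y) + w ^ 4 * c (n + 1) 0 4 -
      (c n 0 1 * y + c n 0 2 * y ^ 2 + c n 0 3 * y ^ 3 + c n 0 4 * y ^ 4),
    -((c (n + 1) 0 1 + c (n + 1) 1 1 * y + c (n + 1) 2 1 * y ^ 2 + c (n + 1) 3 1 * y ^ 3) +
      2 * w * (c (n + 1) 0 2 + c (n + 1) 1 2 * y + c (n + 1) 2 2 * y ^ 2) +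
      3 * w ^ 2 * (c (n + 1) 0 3 + c (n + 1) 1 3 * y) + 4 * w ^ 3 * c (n + 1) 0 4) -
      (c n 1 0 + c n 1 1 * y + c n 1 2 * y ^ 2 + c n 1 3 * y ^ 3),
    (c (n + 1) 0 2 + c (n + 1) 1 2 * y + c (n + 1) 2 2 * y ^ 2) +
      3 * w * (c (n + 1) 0 3 + c (n + 1) 1 3 * y) + 6 * w ^ 2 * c (n + 1) 0 4 -
      (c n 2 0 + c n 2 1 * y + c n 2 2 * y ^ 2),
    -(c (n + 1) 0 3 + c (n + 1) 1 3 * y + 4 * w * c (n + 1) 0 4) - (c n 3 0 + c n 3 1 * y),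
    c (n + 1) 0 4 - c n 4 0] fun x => by
      have hx := h x
      rw [Ipoly_eq, Ipoly_eq] at hx
      simp only [Fin.sum_univ_succ, Fin.sum_univ_zero, Matrix.cons_val_zero, Matrix.cons_val_succ,
        Fin.val_zero, Fin.val_succ]
      linear_combination hx
  simp only [Fin.forall_fin_succ, Matrix.cons_val_zero, Matrix.cons_val_succ, IsEmpty.forall_iff,
    sub_eq_zero] at key
  obtain ⟨h0, h1, h2, h3, h4, -⟩ := key
  exact ⟨h4, h3, h2, h1, h0⟩

theorem StepInvariant.eqs_of_coeff_x3 (hβ : 0 < β) (h : StepInvariant β c n) :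
    c (n + 1) 0 4 = 0 ∧ c n 4 0 = 0 ∧
      c (n + 1) 0 3 = -c n 3 0 ∧ c (n + 1) 1 3 = -c n 3 1 := by
  have h04 : c (n + 1) 0 4 = c n 4 0 := (coeffs_x_eq_of_forall_Ipoly_eq (h · 0)).1
  -- the `y`-coefficients of the `x³`-equation multiplied by `β + y²`
  have key := eq_zero_of_forall_sum_mul_pow_eq_zero ![β * (c (n + 1) 0 3 + c n 3 0),
      β * (c (n + 1) 1 3 + c n 3 1) + 4 * c (n + 1) 0 4, c (n + 1) 0 3 + c n 3 0,
      c (n + 1) 1 3 + c n 3 1] fun y => by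
    have hu : β + y ^ 2 ≠ 0 := by positivity
    obtain ⟨-, h3, -⟩ := coeffs_x_eq_of_forall_Ipoly_eq (h · y)
    field_simp at h3
    simp only [Fin.sum_univ_succ, Fin.sum_univ_zero, Matrix.cons_val_zero, Matrix.cons_val_succ,
      Fin.val_zero, Fin.val_succ]
    linear_combination -h3
  simp only [Fin.forall_fin_succ, Matrix.cons_val_zero, Matrix.cons_val_succ,
    IsEmpty.forall_iff] at key
  obtain ⟨-, h1, h2, h3, -⟩ := key
  have hb04 : c (n + 1) 0 4 = 0 := by linear_combination (h1 - β * h3) / 4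
  exact ⟨hb04, h04 ▸ hb04, by linear_combination h2, by linear_combination h3⟩

theorem StepInvariant.eqs_of_coeff_x2 (hβ : 0 < β) (h : StepInvariant β c n) :
    c (n + 1) 0 3 = 0 ∧ c (n + 1) 1 3 = 0 ∧
      c (n + 1) 0 2 = c n 2 0 ∧ c (n + 1) 1 2 = c n 2 1 ∧ c (n + 1) 2 2 = c n 2 2 := by
  obtain ⟨h04, -⟩ := h.eqs_of_coeff_x3 hβ
  have key := eq_zero_of_forall_sum_mul_pow_eq_zero ![β * (c (n + 1) 0 2 - c n 2 0),
      β * (c (n + 1) 1 2 - c n 2 1) + 3 * c (n + 1) 0 3,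
      β * (c (n + 1) 2 2 - c n 2 2) + (c (n + 1) 0 2 - c n 2 0) + 3 * c (n + 1) 1 3,
      c (n + 1) 1 2 - c n 2 1, c (n + 1) 2 2 - c n 2 2] fun y => by
    have hu : β + y ^ 2 ≠ 0 := by positivity
    obtain ⟨-, -, h2, -⟩ := coeffs_x_eq_of_forall_Ipoly_eq (h · y)
    simp only [h04, mul_zero, add_zero] at h2
    field_simp at h2
    simp only [Fin.sum_univ_succ, Fin.sum_univ_zero, Matrix.cons_val_zero, Matrix.cons_val_succ,
      Fin.val_zero, Fin.val_succ]
    linear_combination h2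
  simp only [Fin.forall_fin_succ, Matrix.cons_val_zero, Matrix.cons_val_succ, IsEmpty.forall_iff,
    mul_eq_zero, hβ.ne', false_or] at key
  obtain ⟨h0, h1, h2, h3, h4, -⟩ := key
  exact ⟨by linear_combination (h1 - β * h3) / 3, by linear_combination (h2 - β * h4 - h0) / 3,
    by linear_combination h0, by linear_combination h3, by linear_combination h4⟩

theorem StepInvariant.eqs_of_coeff_x1 (hβ : 0 < β) (h : StepInvariant β c n) :
    c (n + 1) 0 1 = -c n 1 0 ∧ c (n + 1) 2 1 = -c n 1 2 ∧ c (n + 1) 3 1 = -c n 1 3 ∧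
      c (n + 1) 1 2 = 0 ∧ c (n + 1) 0 2 = β * c (n + 1) 2 2 ∧
      c (n + 1) 1 1 + c n 1 1 = -2 * c (n + 1) 2 2 := by
  obtain ⟨h04, -⟩ := h.eqs_of_coeff_x3 hβ
  obtain ⟨h03, h13, -⟩ := h.eqs_of_coeff_x2 hβ
  have key := eq_zero_of_forall_sum_mul_pow_eq_zero ![β * (c (n + 1) 0 1 + c n 1 0),
      β * (c (n + 1) 1 1 + c n 1 1) + 2 * c (n + 1) 0 2,
      β * (c (n + 1) 2 1 + c n 1 2) + (c (n + 1) 0 1 + c n 1 0) + 2 * c (n + 1) 1 2,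
      β * (c (n + 1) 3 1 + c n 1 3) + (c (n + 1) 1 1 + c n 1 1) + 2 * c (n + 1) 2 2,
      c (n + 1) 2 1 + c n 1 2, c (n + 1) 3 1 + c n 1 3] fun y => by
    have hu : β + y ^ 2 ≠ 0 := by positivity
    obtain ⟨-, -, -, h1, -⟩ := coeffs_x_eq_of_forall_Ipoly_eq (h · y)
    simp only [h04, h03, h13, zero_mul, mul_zero, add_zero] at h1
    field_simp at h1
    simp only [Fin.sum_univ_succ, Fin.sum_univ_zero, Matrix.cons_val_zero, Matrix.cons_val_succ,
      Fin.val_zero, Fin.val_succ]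
    linear_combination -h1
  simp only [Fin.forall_fin_succ, Matrix.cons_val_zero, Matrix.cons_val_succ, IsEmpty.forall_iff,
    mul_eq_zero, hβ.ne', false_or] at key
  obtain ⟨h0, h1, h2, h3, h4, h5, -⟩ := key
  have h11 : c (n + 1) 1 1 + c n 1 1 = -2 * c (n + 1) 2 2 := by
    linear_combination h3 - β * h5
  exact ⟨by linear_combination h0, by linear_combination h4, by linear_combination h5,
    by linear_combination (h2 - β * h4 - h0) / 2, by linear_combination (h1 - β * h11) / 2, h11⟩

theorem StepInvariant.eqs_of_coeff_x0 (hβ : 0 < β) (h : StepInvariant β c n) :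
    c (n + 1) 3 0 = c n 0 3 ∧ c (n + 1) 4 0 = c n 0 4 ∧
      c (n + 1) 1 0 = c n 0 1 - c (n + 1) 2 1 ∧ c (n + 1) 2 0 = c n 0 2 - c (n + 1) 3 1 ∧
      c (n + 1) 0 1 = β * c (n + 1) 2 1 ∧
      c (n + 1) 1 1 + c (n + 1) 2 2 = β * c (n + 1) 3 1 := by
  obtain ⟨h04, -⟩ := h.eqs_of_coeff_x3 hβ
  obtain ⟨h03, h13, -⟩ := h.eqs_of_coeff_x2 hβ
  obtain ⟨-, -, -, h12, h02, -⟩ := h.eqs_of_coeff_x1 hβ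
  have key := eq_zero_of_forall_sum_mul_pow_eq_zero ![0,
      β * (c (n + 1) 1 0 - c n 0 1) + c (n + 1) 0 1,
      β * (c (n + 1) 2 0 - c n 0 2) + c (n + 1) 1 1 + c (n + 1) 2 2,
      β * (c (n + 1) 3 0 - c n 0 3) + (c (n + 1) 1 0 - c n 0 1) + c (n + 1) 2 1,
      β * (c (n + 1) 4 0 - c n 0 4) + (c (n + 1) 2 0 - c n 0 2) + c (n + 1) 3 1,
      c (n + 1) 3 0 - c n 0 3, c (n + 1) 4 0 - c n 0 4] fun y => by
    have hu : β + y ^ 2 ≠ 0 := by positivity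
    obtain ⟨-, -, -, -, h0⟩ := coeffs_x_eq_of_forall_Ipoly_eq (h · y)
    simp only [h04, h03, h13, h12, h02, zero_mul, mul_zero, add_zero] at h0
    field_simp at h0
    simp only [Fin.sum_univ_succ, Fin.sum_univ_zero, Matrix.cons_val_zero, Matrix.cons_val_succ,
      Fin.val_zero, Fin.val_succ]
    linear_combination h0
  simp only [Fin.forall_fin_succ, Matrix.cons_val_zero, Matrix.cons_val_succ,
    IsEmpty.forall_iff] at key
  obtain ⟨-, h1, h2, h3, h4, h5, h6, -⟩ := key
  have h10 : c (n + 1) 1 0 = c n 0 1 - c (n + 1) 2 1 := by linear_combination h3 - β * h5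
  have h20 : c (n + 1) 2 0 = c n 0 2 - c (n + 1) 3 1 := by linear_combination h4 - β * h6
  exact ⟨by linear_combination h5, by linear_combination h6, h10, h20,
    by linear_combination h1 - β * h10, by linear_combination h2 - β * h20⟩

theorem StepInvariant.coeff_eqs (hβ : 0 < β) (h : StepInvariant β c n) :
    c n 4 0 = 0 ∧ c n 3 0 = 0 ∧ c n 3 1 = 0 ∧ c n 2 1 = 0 ∧ c n 2 0 = β * c n 2 2 := by
  obtain ⟨-, h40, h03, h13⟩ := h.eqs_of_coeff_x3 hβ
  obtain ⟨h03', h13', h02, h12, h22⟩ := h.eqs_of_coeff_x2 hβ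
  obtain ⟨-, -, -, h12', h02', -⟩ := h.eqs_of_coeff_x1 hβ
  exact ⟨h40, by linear_combination h03 - h03', by linear_combination h13 - h13',
    by linear_combination h12' - h12, by linear_combination h02' - h02 + β * h22⟩

end Step

section Sequence

variable {β : ℕ → ℝ} {c : ℕ → ℕ → ℕ → ℝ}

theorem coeff_one_zero_eq_zero (hβ : ∀ n, 0 < β n) (h : ∀ n, StepInvariant (β n) c n)
    (n : ℕ) :
    c n 1 0 = 0 := by
  obtain ⟨hb01, -⟩ := (h n).eqs_of_coeff_x1 (hβ n)
  obtain ⟨-, -, -, -, hb01', -⟩ := (h n).eqs_of_coeff_x0 (hβ n)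
  obtain ⟨-, -, -, hb21, -⟩ := (h (n + 1)).coeff_eqs (hβ (n + 1))
  linear_combination hb01 - hb01' - β n * hb21

theorem coeff_zero_two_eq (hβ : ∀ n, 0 < β n) (h : ∀ n, StepInvariant (β n) c n) (n : ℕ) :
    c n 0 2 = β (n + 1) * c n 2 2 := by
  obtain ⟨-, -, h31', -, h20'⟩ := (h (n + 1)).coeff_eqs (hβ (n + 1))
  obtain ⟨-, -, -, -, h22⟩ := (h n).eqs_of_coeff_x2 (hβ n)
  obtain ⟨-, -, -, hb20, -⟩ := (h n).eqs_of_coeff_x0 (hβ n)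
  linear_combination -hb20 + h20' + h31' + β (n + 1) * h22

theorem Ipoly_eq_of_forall_stepInvariant (hβ : ∀ n, 0 < β n)
    (h : ∀ n, StepInvariant (β n) c n)
    (n : ℕ) (x y : ℝ) :
    Ipoly c n x y = c n 2 2 * (β n * x ^ 2 + β (n + 1) * y ^ 2 + x ^ 2 * y ^ 2 - x * y) := by
  obtain ⟨h40, h30, h31, h21, h20⟩ := (h n).coeff_eqs (hβ n)
  obtain ⟨h40', h30', h31', h21', -⟩ := (h (n + 1)).coeff_eqs (hβ (n + 1))
  obtain ⟨-, -, -, -, h22⟩ := (h n).eqs_of_coeff_x2 (hβ n)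
  obtain ⟨-, hb21, hb31, -, -, hb11⟩ := (h n).eqs_of_coeff_x1 (hβ n)
  obtain ⟨hb30, hb40, hb10, -, -, hb11'⟩ := (h n).eqs_of_coeff_x0 (hβ n)
  have h01 : c n 0 1 = 0 := by
    linear_combination -hb10 + coeff_one_zero_eq_zero hβ h (n + 1) + h21'
  have h03 : c n 0 3 = 0 := by linear_combination h30' - hb30
  have h04 : c n 0 4 = 0 := by linear_combination h40' - hb40
  have h12 : c n 1 2 = 0 := by linear_combination hb21 - h21'
  have h13 : c n 1 3 = 0 := by linear_combination hb31 - h31'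
  have h11 : c n 1 1 = -c n 2 2 := by linear_combination hb11 - hb11' - h22 - β n * h31'
  rw [Ipoly_eq, h01, coeff_zero_two_eq hβ h, h03, h04, coeff_one_zero_eq_zero hβ h, h11, h12, h13,
    h20, h21, h30, h31, h40]
  ring

theorem add_two_eq_of_forall_stepInvariant (hβ : ∀ n, 0 < β n)
    (h : ∀ n, StepInvariant (β n) c n)
    (n : ℕ) (hc : c (n + 1) 2 2 ≠ 0) : β (n + 2) = β n := by
  obtain ⟨-, -, -, -, h02, -⟩ := (h n).eqs_of_coeff_x1 (hβ n)
  exact mul_right_cancel₀ hc (by linear_combination h02 - coeff_zero_two_eq hβ h (n + 1))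

end Sequence

/-- If a sequence of positive parameters `β_n` admits a nontrivial non-autonomous
invariant of the form `I(x,y,n) = Σ_{1 ≤ i+j ≤ 4} c n i j xⁱyʲ` for the recurrence
`x_{n+2} = -x_n + x_{n+1}/(β_n + x_{n+1}²)`, then `β_{n+2} = β_n` for all `n`
(so `{β_n}` is `1`- or `2`-periodic), and `I(x,y,n) = γ (β_n x² + β_{n+1} y² +
x²y² - xy)` for a single nonzero constant `γ`. -/
theorem stmt19 (β : ℕ → ℝ) (hβ : ∀ n, 0 < β n)
    (c : ℕ → ℕ → ℕ → ℝ)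
    (hinv : ∀ n : ℕ, ∀ x y : ℝ,
      Ipoly c (n + 1) y (-x + y / (β n + y ^ 2)) = Ipoly c n x y)
    (hnz : ∀ n : ℕ, ∃ x y : ℝ, Ipoly c n x y ≠ 0) :
    (∀ n : ℕ, β (n + 2) = β n) ∧
    ∃ γ : ℕ → ℝ, (∀ n, γ n ≠ 0) ∧ (∀ n, γ (n + 1) = γ n) ∧
      ∀ n : ℕ, ∀ x y : ℝ,
        Ipoly c n x y =
          γ n * (β n * x ^ 2 + β (n + 1) * y ^ 2 + x ^ 2 * y ^ 2 - x * y) := by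
  have hstep : ∀ n, StepInvariant (β n) c n := hinv
  have hform := Ipoly_eq_of_forall_stepInvariant hβ hstep
  have hconst : ∀ n, c (n + 1) 2 2 = c n 2 2 := fun n =>
    let ⟨_, _, _, _, h22⟩ := (hstep n).eqs_of_coeff_x2 (hβ n); h22
  have hne : ∀ n, c n 2 2 ≠ 0 := fun n hzero => by
    obtain ⟨x, y, hxy⟩ := hnz n
    exact hxy (by rw [hform, hzero, zero_mul])
  exact ⟨fun n => add_two_eq_of_forall_stepInvariant hβ hstep n (hne (n + 1)),
    fun n => c n 2 2, hne, hconst, hform⟩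
end
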